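/- Let N1 ~ Poisson(μ1) and N2 ~ Poisson(μ2) be independent with μ1 > μ2 > 0. Then P(N1 > N2) > P(N2 > N1). -/

import Mathlib

/-! Pair the outcome `(N₁, N₂) = (j, k)` with its mirror image `(k, j)`. For `j < k` the two
weights differ by the factor `(μ₁ / μ₂) ^ (k - j) > 1`, so each outcome with `N₂ > N₁` is
outweighed by the corresponding outcome with `N₁ > N₂`. -/

/-- The Poisson probability mass function with rate `μ`. -/
noncomputable def poiPMF (μ : ℝ) (k : ℕ) : ℝ := Real.exp (-μ) * μ ^ k / (Nat.factorial k)

lemma pow_mul_pow_lt_pow_mul_pow {a b : ℝ} (hb : 0 < b) (hba : b < a) {j k : ℕ} (hjk : j < k) :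
    a ^ j * b ^ k < a ^ k * b ^ j := by
  obtain ⟨d, rfl⟩ := Nat.exists_eq_add_of_lt hjk
  have hab : 0 < (a * b) ^ j := pow_pos (mul_pos (hb.trans hba) hb) j
  calc a ^ j * b ^ (j + d + 1) = (a * b) ^ j * b ^ (d + 1) := by ring
    _ < (a * b) ^ j * a ^ (d + 1) :=
        mul_lt_mul_of_pos_left (pow_lt_pow_left₀ hba hb.le d.succ_ne_zero) hab
    _ = a ^ (j + d + 1) * b ^ j := by ring

lemma tsum_ite_lt_lt_tsum_ite_lt_swap {α : Type*} [LinearOrder α] [Nontrivial α]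
    {F : α × α → ℝ} (hF : Summable F) (hswap : ∀ p : α × α, p.1 < p.2 → F p < F p.swap) :
    (∑' p : α × α, if p.1 < p.2 then F p else 0) < ∑' p : α × α, if p.2 < p.1 then F p else 0 := by
  have hbelow : Summable fun p : α × α => if p.2 < p.1 then F p else 0 :=
    (hF.indicator {p | p.2 < p.1}).congr fun p => by simp [Set.indicator_apply]
  have hmirror : Summable fun p : α × α => if p.2 < p.1 then F p.swap else 0 :=
    (((Equiv.prodComm α α).summable_iff.mpr hF).indicator {p | p.2 < p.1}).congr
      fun p => by simp [Set.indicator_apply]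
  have hlt : ∀ p : α × α, p.2 < p.1 → F p.swap < F p := fun p hp => hswap p.swap hp
  obtain ⟨x, y, hxy⟩ := exists_pair_lt α
  rw [← (Equiv.prodComm α α).tsum_eq]
  refine Summable.tsum_lt_tsum (i := (y, x)) (fun p => ?_) ?_ hmirror hbelow
  · by_cases hp : p.2 < p.1
    · simpa [hp] using (hlt p hp).le
    · simp [hp]
  · simpa [hxy] using hlt (y, x) hxy

lemma poiPMF_nonneg {μ : ℝ} (hμ : 0 ≤ μ) (k : ℕ) : 0 ≤ poiPMF μ k := by
  unfold poiPMF
  positivity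

lemma summable_poiPMF (μ : ℝ) : Summable (poiPMF μ) := by
  refine ((Real.summable_pow_div_factorial μ).mul_left (Real.exp (-μ))).congr fun k => ?_
  rw [poiPMF, mul_div_assoc]

lemma poiPMF_mul_poiPMF (a b : ℝ) (j k : ℕ) :
    poiPMF a j * poiPMF b k
      = Real.exp (-a) * Real.exp (-b) / (j.factorial * k.factorial) * (a ^ j * b ^ k) := by
  unfold poiPMF
  field_simp

lemma poiPMF_mul_poiPMF_lt_swap {a b : ℝ} (hb : 0 < b) (hba : b < a) {j k : ℕ} (hjk : j < k) :
    poiPMF a j * poiPMF b k < poiPMF a k * poiPMF b j := by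
  rw [poiPMF_mul_poiPMF, poiPMF_mul_poiPMF, mul_comm (k.factorial : ℝ)]
  exact mul_lt_mul_of_pos_left (pow_mul_pow_lt_pow_mul_pow hb hba hjk) (by positivity)

/-- For independent `N₁ ~ Poisson μ₁`, `N₂ ~ Poisson μ₂` with `μ₁ > μ₂ > 0`,
`P(N₁ > N₂) > P(N₂ > N₁)`. -/
theorem poisson_larger_rate_wins (μ₁ μ₂ : ℝ) (h₂ : 0 < μ₂) (hlt : μ₂ < μ₁) :
    (∑' p : ℕ × ℕ, if p.2 < p.1 then poiPMF μ₁ p.1 * poiPMF μ₂ p.2 else 0)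
      > (∑' p : ℕ × ℕ, if p.1 < p.2 then poiPMF μ₁ p.1 * poiPMF μ₂ p.2 else 0) := by
  have hF : Summable fun p : ℕ × ℕ => poiPMF μ₁ p.1 * poiPMF μ₂ p.2 :=
    (summable_poiPMF μ₁).mul_of_nonneg (summable_poiPMF μ₂)
      (poiPMF_nonneg (h₂.trans hlt).le) (poiPMF_nonneg h₂.le)
  exact tsum_ite_lt_lt_tsum_ite_lt_swap hF fun p hp => poiPMF_mul_poiPMF_lt_swap h₂ hlt hp
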